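/- arXiv:2107.12263 — 3 statements merged into one kernel-verified Lean document; each statement's English description precedes it below -/
import Mathlib

section
/- In G_n = B_n / [PB_n, PB_n], if |{i,j} ∩ {k,ℓ}| ≠ 1 then σ̃_{i,j} g_{k,ℓ} σ̃_{i,j}⁻¹ = g_{k,ℓ}. In particular, conjugation by half-twists fixes full twists on disjoint or equal index pairs. -/
/-- Artin relations for the braid group on `n` strands (generators indexed by `Fin (n-1)`). -/
def braidRels (n : ℕ) : Set (FreeGroup (Fin (n - 1))) :=
  {r | ∃ i j : Fin (n - 1),
    ((i : ℕ) + 1 = (j : ℕ) ∧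
      r = FreeGroup.of i * FreeGroup.of j * FreeGroup.of i *
        (FreeGroup.of j * FreeGroup.of i * FreeGroup.of j)⁻¹) ∨
    ((i : ℕ) + 1 < (j : ℕ) ∧
      r = FreeGroup.of i * FreeGroup.of j * (FreeGroup.of j * FreeGroup.of i)⁻¹)}

/-- The braid group `B_n`. -/
abbrev BraidGroup (n : ℕ) := PresentedGroup (braidRels n)

/-- The Artin generator `b_t` (`0`-based; trivial outside range). -/
noncomputable def bgen (n t : ℕ) : BraidGroup n :=
  if h : t < n - 1 then PresentedGroup.of (⟨t, h⟩ : Fin (n - 1)) else 1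

/-- The product `b_i ⋯ b_{j-1}`. -/
noncomputable def bpref (n i j : ℕ) : BraidGroup n :=
  ((List.range' i (j - i)).map (bgen n)).prod

/-- The half twist `b_{i,j}` (for strands `i < j`, `0`-based). -/
noncomputable def halfTwist (n i j : ℕ) : BraidGroup n :=
  bpref n i (j - 1) * bgen n (j - 1) * (bpref n i (j - 1))⁻¹

/-- The half twist for unordered indices. -/
noncomputable def bb (n i j : ℕ) : BraidGroup n := halfTwist n (min i j) (max i j)

/-- The standard generator condition for the projection `B_n → S_n`. -/
def IsBraidProj (n : ℕ) (π : BraidGroup n →* Equiv.Perm (Fin n)) : Prop :=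
  ∀ i : Fin (n - 1), π (PresentedGroup.of i) =
    Equiv.swap ⟨(i : ℕ), by have := i.2; omega⟩ ⟨(i : ℕ) + 1, by have := i.2; omega⟩

/-- `G_n = B_n/[PB_n, PB_n]`. -/
abbrev Gq (n : ℕ) (π : BraidGroup n →* Equiv.Perm (Fin n)) :=
  BraidGroup n ⧸ (⁅π.ker, π.ker⁆ : Subgroup (BraidGroup n))

/-- Image of the half twist `b_{i,j}` in `G_n`. -/
noncomputable def ht (n : ℕ) (π : BraidGroup n →* Equiv.Perm (Fin n)) (i j : ℕ) : Gq n π :=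
  QuotientGroup.mk (bb n i j)

/-- Image of the full twist `b_{i,j}²` in `G_n`. -/
noncomputable def ft (n : ℕ) (π : BraidGroup n →* Equiv.Perm (Fin n)) (i j : ℕ) : Gq n π :=
  QuotientGroup.mk ((bb n i j) ^ 2)

/-!
Conjugation by `σ̃_{i,j}` permutes the full twists through the transposition `(i j)`:
`σ̃_{i,j} g_{k,ℓ} σ̃_{i,j}⁻¹ = g_{(i j) k, (i j) ℓ}`, and `(i j)` fixes `{k, ℓ}` exactly when the
two pairs are disjoint or equal. For an Artin generator `b_t` the formula is a case check with
the braid relations; in the two cases where it is not the image of an identity in `B_n`, one uses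
that `b_t²` is pure, so conjugation by `b_t` and by `b_t⁻¹` agree on `PB_n / [PB_n, PB_n]`.
The general case follows by induction on `j - i` from `b_{i,j} = b_i b_{i+1,j} b_i⁻¹`.
-/

theorem bgen_braid (n : ℕ) {t : ℕ} (ht : t + 2 < n) :
    bgen n t * bgen n (t + 1) * bgen n t = bgen n (t + 1) * bgen n t * bgen n (t + 1) := by
  have h₀ : t < n - 1 := by omega
  have h₁ : t + 1 < n - 1 := by omega
  have := PresentedGroup.mk_eq_mk_of_mul_inv_mem (rels := braidRels n)
    ⟨⟨t, h₀⟩, ⟨t + 1, h₁⟩, Or.inl ⟨rfl, rfl⟩⟩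
  simpa [bgen, h₀, h₁, PresentedGroup.of] using this

theorem bgen_commute_of_add_two_le (n : ℕ) {s t : ℕ} (hst : s + 2 ≤ t) :
    Commute (bgen n s) (bgen n t) := by
  by_cases ht : t < n - 1
  · have hs : s < n - 1 := by omega
    have := PresentedGroup.mk_eq_mk_of_mul_inv_mem (rels := braidRels n)
      ⟨⟨s, hs⟩, ⟨t, ht⟩, Or.inr ⟨by simp only; omega, rfl⟩⟩
    simpa [Commute, SemiconjBy, bgen, hs, ht, PresentedGroup.of] using this
  · simp [bgen, ht]

theorem bgen_commute (n : ℕ) {s t : ℕ} (hst : s + 2 ≤ t ∨ t + 2 ≤ s) :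
    Commute (bgen n s) (bgen n t) :=
  hst.elim (bgen_commute_of_add_two_le n) fun h ↦ (bgen_commute_of_add_two_le n h).symm

theorem bpref_of_le (n : ℕ) {i j : ℕ} (h : j ≤ i) : bpref n i j = 1 := by
  simp [bpref, Nat.sub_eq_zero_of_le h]

theorem bpref_eq_bgen_mul (n : ℕ) {i j : ℕ} (h : i < j) :
    bpref n i j = bgen n i * bpref n (i + 1) j := by
  rw [bpref, show j - i = j - (i + 1) + 1 by omega, List.range'_succ]
  simp [bpref]

theorem bpref_succ (n : ℕ) {i j : ℕ} (h : i ≤ j) :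
    bpref n i (j + 1) = bpref n i j * bgen n j := by
  rw [bpref, show j + 1 - i = j - i + 1 by omega, List.range'_concat]
  simp [bpref, show i + (j - i) = j by omega]

theorem bgen_commute_bpref (n : ℕ) {s a b : ℕ}
    (h : ∀ u, a ≤ u → u < b → s + 2 ≤ u ∨ u + 2 ≤ s) : Commute (bgen n s) (bpref n a b) := by
  refine Commute.list_prod_right _ _ fun x hx ↦ ?_
  obtain ⟨u, hu, rfl⟩ := List.mem_map.mp hx
  rw [List.mem_range'_1] at hu
  exact bgen_commute n (h u hu.1 (by omega))

theorem bgen_mul_bpref (n : ℕ) {a b t : ℕ} (hat : a < t) (htb : t < b) (hbn : b < n) :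
    bgen n t * bpref n a b = bpref n a b * bgen n (t - 1) := by
  rw [bpref_eq_bgen_mul n (hat.trans htb)]
  rcases (show t = a + 1 ∨ a + 1 < t by omega) with rfl | hat'
  · have hP : Commute (bgen n a) (bpref n (a + 2) b) :=
      bgen_commute_bpref n fun u hu _ ↦ Or.inl (by omega)
    rw [bpref_eq_bgen_mul n htb, Nat.add_sub_cancel]
    calc bgen n (a + 1) * (bgen n a * (bgen n (a + 1) * bpref n (a + 2) b))
        = bgen n (a + 1) * bgen n a * bgen n (a + 1) * bpref n (a + 2) b := by group
      _ = bgen n a * bgen n (a + 1) * (bgen n a * bpref n (a + 2) b) := by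
        rw [← bgen_braid n (by omega)]; group
      _ = bgen n a * (bgen n (a + 1) * bpref n (a + 2) b) * bgen n a := by
        rw [hP.eq]; group
  · rw [← mul_assoc, (bgen_commute_of_add_two_le n (show a + 2 ≤ t by omega)).symm.eq,
      mul_assoc, bgen_mul_bpref n hat' htb hbn, mul_assoc]
termination_by t - a

theorem halfTwist_succ (n t : ℕ) : halfTwist n t (t + 1) = bgen n t := by
  simp [halfTwist, bpref_of_le]

theorem halfTwist_eq_conj_succ_left (n : ℕ) {t l : ℕ} (h : t + 1 < l) :
    halfTwist n t l = bgen n t * halfTwist n (t + 1) l * (bgen n t)⁻¹ := by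
  simp only [halfTwist, bpref_eq_bgen_mul n (show t < l - 1 by omega)]
  group

theorem halfTwist_eq_conj_succ_right (n : ℕ) {k t : ℕ} (hkt : k < t) (htn : t + 1 < n) :
    halfTwist n k t = bgen n t * halfTwist n k (t + 1) * (bgen n t)⁻¹ := by
  obtain ⟨p, rfl⟩ : ∃ p, t = p + 1 := ⟨t - 1, by omega⟩
  have hP : Commute (bgen n (p + 1)) (bpref n k p) :=
    bgen_commute_bpref n fun u _ hu ↦ Or.inr (by omega)
  have hconj : ∀ x, bgen n (p + 1) * (bpref n k p * x * (bpref n k p)⁻¹) * (bgen n (p + 1))⁻¹ =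
      bpref n k p * (bgen n (p + 1) * x * (bgen n (p + 1))⁻¹) * (bpref n k p)⁻¹ := fun x ↦ by
    calc _ = (bgen n (p + 1) * bpref n k p) * x * (bgen n (p + 1) * bpref n k p)⁻¹ := by group
      _ = (bpref n k p * bgen n (p + 1)) * x * (bpref n k p * bgen n (p + 1))⁻¹ := by rw [hP.eq]
      _ = _ := by group
  have hbraid : bgen n (p + 1) * (bgen n p * bgen n (p + 1) * (bgen n p)⁻¹) * (bgen n (p + 1))⁻¹ =
      bgen n p := by
    calc _ = (bgen n (p + 1) * bgen n p * bgen n (p + 1)) * (bgen n p)⁻¹ * (bgen n (p + 1))⁻¹ := by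
          group
      _ = bgen n p := by rw [← bgen_braid n htn]; group
  simp only [halfTwist, Nat.add_sub_cancel, bpref_succ n (show k ≤ p by omega)]
  rw [show bpref n k p * bgen n p * bgen n (p + 1) * (bpref n k p * bgen n p)⁻¹ =
    bpref n k p * (bgen n p * bgen n (p + 1) * (bgen n p)⁻¹) * (bpref n k p)⁻¹ by group,
    hconj, hbraid]

theorem bgen_commute_halfTwist (n : ℕ) {t k l : ℕ} (hkl : k < l) (hln : l ≤ n)
    (htk : t ≠ k) (htl : t ≠ l) (htk' : t + 1 ≠ k) (htl' : t + 1 ≠ l) :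
    Commute (bgen n t) (halfTwist n k l) := by
  rcases (show (t + 1 < k ∨ l < t) ∨ (k < t ∧ t + 1 < l) by omega) with hout | ⟨hkt, htl₁⟩
  · have hP : Commute (bgen n t) (bpref n k (l - 1)) :=
      bgen_commute_bpref n fun u hu hul ↦ by omega
    exact (hP.mul_right (bgen_commute n (by omega))).mul_right hP.inv_right
  · have hshift := bgen_mul_bpref n hkt (show t < l - 1 by omega) (show l - 1 < n by omega)
    rw [halfTwist, eq_mul_inv_of_mul_eq hshift]
    exact (Commute.conj_iff _).mpr (bgen_commute n (by omega))

section Quotient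

variable (n : ℕ) (π : BraidGroup n →* Equiv.Perm (Fin n))

theorem ft_comm (a b : ℕ) : ft n π a b = ft n π b a := by
  simp only [ft, bb, min_comm, max_comm]

theorem ft_of_lt {a b : ℕ} (h : a < b) : ft n π a b = QuotientGroup.mk (halfTwist n a b ^ 2) := by
  simp only [ft, bb, min_eq_left h.le, max_eq_right h.le]

theorem ht_of_lt {a b : ℕ} (h : a < b) : ht n π a b = QuotientGroup.mk (halfTwist n a b) := by
  simp only [ht, bb, min_eq_left h.le, max_eq_right h.le]

theorem ht_succ (t : ℕ) : ht n π t (t + 1) = QuotientGroup.mk (bgen n t) := by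
  rw [ht_of_lt n π t.lt_succ_self, halfTwist_succ]

theorem ht_eq_conj_succ_left {i j : ℕ} (h : i + 1 < j) :
    ht n π i j = ht n π i (i + 1) * ht n π (i + 1) j * (ht n π i (i + 1))⁻¹ := by
  rw [ht_of_lt n π (by omega), ht_of_lt n π h, ht_succ, halfTwist_eq_conj_succ_left n h]
  rfl

variable {n π}

theorem bgen_sq_mem_ker (hgen : IsBraidProj n π) (t : ℕ) : bgen n t ^ 2 ∈ π.ker := by
  unfold bgen
  split_ifs
  · rw [MonoidHom.mem_ker, sq, map_mul, hgen, Equiv.swap_mul_self]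
  · simp

theorem halfTwist_sq_mem_ker (hgen : IsBraidProj n π) (k l : ℕ) : halfTwist n k l ^ 2 ∈ π.ker := by
  rw [show halfTwist n k l ^ 2 =
      bpref n k (l - 1) * bgen n (l - 1) ^ 2 * (bpref n k (l - 1))⁻¹ by
    simp only [halfTwist, sq]; group]
  exact π.normal_ker.conj_mem _ (bgen_sq_mem_ker hgen _) _

theorem mk_conj_of_mem_ker {p q : BraidGroup n} (hp : p ∈ π.ker) (hq : q ∈ π.ker) :
    (QuotientGroup.mk (p * q * p⁻¹) : Gq n π) = QuotientGroup.mk q := by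
  rw [QuotientGroup.eq]
  convert Subgroup.commutator_mem_commutator hp (inv_mem hq) using 1
  rw [commutatorElement_def]
  group

theorem mk_conj_sq_of_conj_eq {x y z : BraidGroup n} (h : x * y * x⁻¹ = z) :
    (QuotientGroup.mk x : Gq n π) * QuotientGroup.mk (y ^ 2) * (QuotientGroup.mk x)⁻¹ =
      QuotientGroup.mk (z ^ 2) := by
  simp only [← QuotientGroup.mk_inv, ← QuotientGroup.mk_mul, ← h, sq]
  group

theorem mk_conj_sq_of_inv_conj_eq {x y z : BraidGroup n} (hx : x ^ 2 ∈ π.ker)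
    (hy : y ^ 2 ∈ π.ker) (h : x⁻¹ * z * x = y) :
    (QuotientGroup.mk x : Gq n π) * QuotientGroup.mk (z ^ 2) * (QuotientGroup.mk x)⁻¹ =
      QuotientGroup.mk (y ^ 2) := by
  rw [← QuotientGroup.mk_inv, ← QuotientGroup.mk_mul, ← QuotientGroup.mk_mul,
    show x * z ^ 2 * x⁻¹ = x ^ 2 * y ^ 2 * (x ^ 2)⁻¹ by rw [← h]; simp only [sq]; group]
  exact mk_conj_of_mem_ker hx hy

end Quotient

open Equiv

theorem Equiv.swap_apply_swap_apply_swap {α : Type*} [DecidableEq α] {a b c : α} (hcb : c ≠ b)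
    (hca : c ≠ a) (x : α) : swap a b (swap b c (swap a b x)) = swap a c x := by
  rw [← swap_mul_swap_mul_swap hcb hca, swap_comm b a, swap_comm c b]
  rfl

theorem swap_apply_lt {n a b x : ℕ} (ha : a < n) (hb : b < n) (hx : x < n) : swap a b x < n := by
  rw [swap_apply_def]
  split_ifs <;> assumption

section Conjugation

variable {n : ℕ} {π : BraidGroup n →* Equiv.Perm (Fin n)}

theorem ht_succ_conj_ft_of_lt (hgen : IsBraidProj n π) {t k l : ℕ} (hkl : k < l) (hln : l < n)
    (htn : t + 1 < n) :
    ht n π t (t + 1) * ft n π k l * (ht n π t (t + 1))⁻¹ =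
      ft n π (swap t (t + 1) k) (swap t (t + 1) l) := by
  rw [ht_succ]
  have hb := bgen_sq_mem_ker hgen t
  have hH := halfTwist_sq_mem_ker hgen
  rcases (show (t ≠ k ∧ t ≠ l ∧ t + 1 ≠ k ∧ t + 1 ≠ l) ∨ t + 1 = k ∨ (t = k ∧ t + 1 = l) ∨
      (t = k ∧ t + 1 < l) ∨ (k < t ∧ t + 1 = l) ∨ t = l by omega)
    with ⟨htk, htl, htk', htl'⟩ | rfl | ⟨rfl, rfl⟩ | ⟨rfl, hl⟩ | ⟨hk, rfl⟩ | rfl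
  · rw [swap_apply_of_ne_of_ne htk.symm htk'.symm, swap_apply_of_ne_of_ne htl.symm htl'.symm,
      ft_of_lt n π hkl]
    exact mk_conj_sq_of_conj_eq
      (bgen_commute_halfTwist n hkl hln.le htk htl htk' htl').mul_inv_cancel
  · rw [swap_apply_right, swap_apply_of_ne_of_ne (by omega) (by omega), ft_of_lt n π hkl,
      ft_of_lt n π (by omega)]
    exact mk_conj_sq_of_conj_eq (halfTwist_eq_conj_succ_left n hkl).symm
  · rw [swap_apply_left, swap_apply_right, ft_comm n π (t + 1), ft_of_lt n π hkl, halfTwist_succ]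
    exact mk_conj_sq_of_conj_eq (by group)
  · rw [swap_apply_left, swap_apply_of_ne_of_ne (by omega) (by omega), ft_of_lt n π hkl,
      ft_of_lt n π hl]
    exact mk_conj_sq_of_inv_conj_eq hb (hH _ _) (by rw [halfTwist_eq_conj_succ_left n hl]; group)
  · rw [swap_apply_of_ne_of_ne (by omega) (by omega), swap_apply_right, ft_of_lt n π hkl,
      ft_of_lt n π hk]
    exact mk_conj_sq_of_conj_eq (halfTwist_eq_conj_succ_right n hk htn).symm
  · rw [swap_apply_of_ne_of_ne (by omega) (by omega), swap_apply_left, ft_of_lt n π hkl,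
      ft_of_lt n π (by omega)]
    exact mk_conj_sq_of_inv_conj_eq hb (hH _ _)
      (by rw [halfTwist_eq_conj_succ_right n hkl htn]; group)

theorem ht_succ_conj_ft (hgen : IsBraidProj n π) {t k l : ℕ} (hkl : k ≠ l) (hkn : k < n)
    (hln : l < n) (htn : t + 1 < n) :
    ht n π t (t + 1) * ft n π k l * (ht n π t (t + 1))⁻¹ =
      ft n π (swap t (t + 1) k) (swap t (t + 1) l) := by
  rcases hkl.lt_or_gt with h | h
  · exact ht_succ_conj_ft_of_lt hgen h hln htn
  · rw [ft_comm, ht_succ_conj_ft_of_lt hgen h hkn htn, ft_comm]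

theorem ht_succ_inv_conj_ft (hgen : IsBraidProj n π) {t k l : ℕ} (hkl : k ≠ l) (hkn : k < n)
    (hln : l < n) (htn : t + 1 < n) :
    (ht n π t (t + 1))⁻¹ * ft n π k l * ht n π t (t + 1) =
      ft n π (swap t (t + 1) k) (swap t (t + 1) l) := by
  have h := ht_succ_conj_ft hgen ((swap t (t + 1)).injective.ne hkl)
    (swap_apply_lt (by omega) htn hkn) (swap_apply_lt (by omega) htn hln) htn
  rw [swap_apply_self, swap_apply_self] at h
  rw [← h]
  group

theorem ht_conj_ft (hgen : IsBraidProj n π) {i j k l : ℕ} (hij : i < j) (hjn : j < n)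
    (hkl : k ≠ l) (hkn : k < n) (hln : l < n) :
    ht n π i j * ft n π k l * (ht n π i j)⁻¹ = ft n π (swap i j k) (swap i j l) := by
  rcases (show j = i + 1 ∨ i + 1 < j by omega) with rfl | hij'
  · exact ht_succ_conj_ft hgen hkl hkn hln hjn
  have hi : i + 1 < n := by omega
  have hsk : swap i (i + 1) k < n := swap_apply_lt (by omega) hi hkn
  have hsl : swap i (i + 1) l < n := swap_apply_lt (by omega) hi hln
  have hconj (a b c : Gq n π) :
      a * b * a⁻¹ * c * (a * b * a⁻¹)⁻¹ = a * (b * (a⁻¹ * c * a) * b⁻¹) * a⁻¹ := by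
    group
  rw [ht_eq_conj_succ_left n π hij', hconj, ht_succ_inv_conj_ft hgen hkl hkn hln hi,
    ht_conj_ft hgen hij' hjn ((swap i (i + 1)).injective.ne hkl) hsk hsl,
    ht_succ_conj_ft hgen ((swap _ _).injective.ne ((swap i (i + 1)).injective.ne hkl))
      (swap_apply_lt (by omega) hjn hsk) (swap_apply_lt (by omega) hjn hsl) hi,
    swap_apply_swap_apply_swap (by omega) (by omega),
    swap_apply_swap_apply_swap (by omega) (by omega)]
termination_by j - i

end Conjugation

theorem disjoint_or_eq_of_card_pair_inter_ne_one {i j k l : ℕ} (hij : i < j) (hkl : k < l)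
    (h : (({i, j} : Finset ℕ) ∩ {k, l}).card ≠ 1) :
    (k ≠ i ∧ k ≠ j ∧ l ≠ i ∧ l ≠ j) ∨ (i = k ∧ j = l) := by
  by_contra hne
  refine h (Finset.card_eq_one.mpr ?_)
  have hmem (x : ℕ) : x ∈ ({i, j} : Finset ℕ) ∩ {k, l} ↔ (x = i ∨ x = j) ∧ (x = k ∨ x = l) := by
    simp only [Finset.mem_inter, Finset.mem_insert, Finset.mem_singleton]
  rcases (show k = i ∨ k = j ∨ l = i ∨ l = j by omega) with rfl | rfl | rfl | rfl <;>
    first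
    | exact ⟨k, Finset.ext fun x ↦ by rw [hmem, Finset.mem_singleton]; omega⟩
    | exact ⟨l, Finset.ext fun x ↦ by rw [hmem, Finset.mem_singleton]; omega⟩

theorem statement9_general (n : ℕ) (π : BraidGroup n →* Equiv.Perm (Fin n))
    (hgen : IsBraidProj n π)
    (i j k l : ℕ) (hij : i < j) (hkl : k < l) (hjn : j < n) (hln : l < n)
    (hcard : (({i, j} : Finset ℕ) ∩ {k, l}).card ≠ 1) :
    ht n π i j * ft n π k l * (ht n π i j)⁻¹ = ft n π k l := by
  have hconj := ht_conj_ft hgen hij hjn hkl.ne (hkl.trans hln) hln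
  obtain ⟨hki, hkj, hli, hlj⟩ | ⟨rfl, rfl⟩ := disjoint_or_eq_of_card_pair_inter_ne_one hij hkl hcard
  · rwa [swap_apply_of_ne_of_ne hki hkj, swap_apply_of_ne_of_ne hli hlj] at hconj
  · rwa [swap_apply_left, swap_apply_right, ft_comm n π j] at hconj

/-- In `G_n = B_n/[PB_n, PB_n]`, if `|{i,j} ∩ {k,ℓ}| ≠ 1` then
`σ̃_{i,j} g_{k,ℓ} σ̃_{i,j}⁻¹ = g_{k,ℓ}`: conjugation by half twists fixes full twists on
disjoint or equal index pairs. -/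
theorem statement9 (n : ℕ) (π : BraidGroup n →* Equiv.Perm (Fin n))
    (hgen : IsBraidProj n π) (hsurj : Function.Surjective π)
    (i j k l : ℕ) (hij : i < j) (hkl : k < l) (hjn : j < n) (hln : l < n)
    (hcard : (({i, j} : Finset ℕ) ∩ {k, l}).card ≠ 1) :
    ht n π i j * ft n π k l * (ht n π i j)⁻¹ = ft n π k l :=
  statement9_general n π hgen i j k l hij hkl hjn hln hcard
end

section
/- In the group G_n = B_n/[PB_n, PB_n], for i < k < j (or j < i < k, or k < j < i) the relation σ̃_{i,j} σ̃_{j,k} σ̃_{i,j}⁻¹ σ̃_{i,k}⁻¹ = g_{i,j} g_{k,j}⁻¹ holds, and equivalently σ̃_{i,j}⁻¹ σ̃_{j,k} σ̃_{i,j} = σ̃_{i,k}. -/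
/-! For `a < c < b` put `A = b_{a,b}`, `B = b_{a,c}`, `C = b_{c,b}`. Since `b_{a,b}` is the
conjugate of `b_{c,b}` by `b_a ⋯ b_{c-1}`, and `b_{c,b}` satisfies the braid relation with
`b_{c-1}` and commutes with `b_a, …, b_{c-2}`, one gets `A B = B C = C A` in `B_n`.
In each of the three orderings `(X, Z, Y) = (σ̃_{i,j}, σ̃_{i,k}, σ̃_{k,j})` is a cyclic rotation
of `(A, B, C)`, so `X Z = Z Y = Y X`, which is the conjugation formula. Moreover
`Y = X Z X⁻¹ = Z⁻¹ X Z`, which reduces the commutator formula to `X² Z² = Z² X²`; this holds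
in `G_n` because `X²` and `Z²` are images of pure braids. -/

section GroupIdentities

variable {G : Type*} [Group G]

theorem braid_conj_of_braid {u v w : G} (huv : u * v * u = v * u * v)
    (hvw : v * w * v = w * v * w) (huw : Commute u w) :
    u * (v * w * v⁻¹) * u = v * w * v⁻¹ * u * (v * w * v⁻¹) := by
  have hconj : v * w * v⁻¹ = w⁻¹ * v * w := by
    rw [mul_inv_eq_iff_eq_mul, mul_assoc, mul_assoc, ← mul_assoc v, hvw]; group
  have huw' : u * w⁻¹ = w⁻¹ * u := huw.inv_right.eq
  calc u * (v * w * v⁻¹) * u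
      = u * w⁻¹ * v * (w * u) := by rw [hconj]; group
    _ = w⁻¹ * (v * u * v) * w := by rw [huw', ← huw.eq, ← huv]; group
    _ = w⁻¹ * v * u * (v * w * v) * v⁻¹ := by group
    _ = w⁻¹ * v * (u * w) * (v * w * v⁻¹) := by rw [hvw]; group
    _ = w⁻¹ * v * w * u * (v * w * v⁻¹) := by rw [huw.eq]; group
    _ = v * w * v⁻¹ * u * (v * w * v⁻¹) := by rw [← hconj]

theorem conj_eq_and_commutator_eq_sq {x y z : G} (hxz : x * z = z * y) (hzy : z * y = y * x)
    (hsq : Commute (x ^ 2) (z ^ 2)) :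
    x * y * x⁻¹ * z⁻¹ = x ^ 2 * (y ^ 2)⁻¹ ∧ x⁻¹ * y * x = z := by
  have hyx : y * x = x * z := hzy.symm.trans hxz.symm
  have hy : y = z⁻¹ * x * z := by rw [mul_assoc, hxz, inv_mul_cancel_left]
  refine ⟨?_, by rw [mul_assoc, hyx, inv_mul_cancel_left]⟩
  calc x * y * x⁻¹ * z⁻¹
      = x ^ 2 * (z * (x ^ 2)⁻¹ * z⁻¹) := by rw [eq_mul_inv_of_mul_eq hyx, sq]; group
    _ = x ^ 2 * (z⁻¹ * (z ^ 2 * (x ^ 2)⁻¹) * z⁻¹) := by group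
    _ = x ^ 2 * (z⁻¹ * ((x ^ 2)⁻¹ * z ^ 2) * z⁻¹) := by rw [hsq.inv_left.eq]
    _ = x ^ 2 * (y ^ 2)⁻¹ := by rw [hy, sq, sq, sq]; group

end GroupIdentities

open scoped commutatorElement in
theorem QuotientGroup.commute_mk_of_mem_of_mem {G : Type*} [Group G] {H : Subgroup G}
    [H.Normal] {p q : G} (hp : p ∈ H) (hq : q ∈ H) :
    Commute (p : G ⧸ ⁅H, H⁆) (q : G ⧸ ⁅H, H⁆) := by
  rw [Commute, SemiconjBy, ← QuotientGroup.mk_mul, ← QuotientGroup.mk_mul, QuotientGroup.eq]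
  have h : (p * q)⁻¹ * (q * p) = ⁅q⁻¹, p⁻¹⁆ := by rw [commutatorElement_def]; group
  rw [h]
  exact Subgroup.commutator_mem_commutator (inv_mem hq) (inv_mem hp)

namespace BraidGroup

variable {n : ℕ}

theorem bgen_braid {t : ℕ} (h : t + 1 < n - 1) :
    bgen n t * bgen n (t + 1) * bgen n t = bgen n (t + 1) * bgen n t * bgen n (t + 1) := by
  have ht : t < n - 1 := by omega
  rw [bgen, bgen, dif_pos ht, dif_pos h]
  simpa only [PresentedGroup.of, map_mul] using
    PresentedGroup.mk_eq_mk_of_mul_inv_mem (rels := braidRels n)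
      ⟨⟨t, ht⟩, ⟨t + 1, h⟩, Or.inl ⟨rfl, rfl⟩⟩

theorem bgen_commute {t u : ℕ} (h : t + 1 < u) : Commute (bgen n t) (bgen n u) := by
  by_cases hu : u < n - 1
  · have ht : t < n - 1 := by omega
    rw [bgen, bgen, dif_pos ht, dif_pos hu, Commute, SemiconjBy]
    simpa only [PresentedGroup.of, map_mul] using
      PresentedGroup.mk_eq_mk_of_mul_inv_mem (rels := braidRels n)
        ⟨⟨t, ht⟩, ⟨u, hu⟩, Or.inr ⟨h, rfl⟩⟩
  · rw [show bgen n u = 1 from dif_neg hu]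
    exact Commute.one_right _

theorem bpref_of_le {a b : ℕ} (h : b ≤ a) : bpref n a b = 1 := by
  rw [bpref, Nat.sub_eq_zero_of_le h, List.range'_zero, List.map_nil, List.prod_nil]

theorem bpref_succ {a m : ℕ} (h : a ≤ m) : bpref n a (m + 1) = bpref n a m * bgen n m := by
  rw [bpref, bpref, show m + 1 - a = m - a + 1 by omega, List.range'_concat, List.map_append,
    List.prod_append, show a + 1 * (m - a) = m by omega, List.map_singleton,
    List.prod_singleton]

theorem bpref_eq_bgen_mul {a m : ℕ} (h : a < m) : bpref n a m = bgen n a * bpref n (a + 1) m := by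
  rw [bpref, bpref, show m - a = m - (a + 1) + 1 by omega, List.range'_succ, List.map_cons,
    List.prod_cons]

theorem bgen_commute_bpref {t c m : ℕ} (h : t + 1 < c) : Commute (bgen n t) (bpref n c m) :=
  Commute.list_prod_right _ _ fun _ hy => by
    obtain ⟨u, hu, rfl⟩ := List.mem_map.mp hy
    exact bgen_commute (by simp only [List.mem_range'_1] at hu; omega)

theorem halfTwist_self_succ (c : ℕ) : halfTwist n c (c + 1) = bgen n c := by
  rw [halfTwist, Nat.add_sub_cancel, bpref_of_le le_rfl, one_mul, inv_one, mul_one]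

theorem halfTwist_eq_bgen_conj {c b : ℕ} (h : c + 1 < b) :
    halfTwist n c b = bgen n c * halfTwist n (c + 1) b * (bgen n c)⁻¹ := by
  rw [halfTwist, halfTwist, bpref_eq_bgen_mul (show c < b - 1 by omega)]
  group

theorem bgen_commute_halfTwist {t c b : ℕ} (h : t + 1 < c) (hcb : c < b) :
    Commute (bgen n t) (halfTwist n c b) := by
  have hp : Commute (bgen n t) (bpref n c (b - 1)) := bgen_commute_bpref h
  exact (hp.mul_right (bgen_commute (by omega))).mul_right hp.inv_right

theorem bpref_commute_halfTwist {a m c b : ℕ} (h : m < c) (hcb : c < b) :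
    Commute (bpref n a m) (halfTwist n c b) :=
  Commute.list_prod_left _ _ fun _ hy => by
    obtain ⟨u, hu, rfl⟩ := List.mem_map.mp hy
    exact bgen_commute_halfTwist (by simp only [List.mem_range'_1] at hu; omega) hcb

theorem bpref_conj_halfTwist {a c b : ℕ} (hac : a ≤ c) (hcb : c < b) :
    bpref n a c * halfTwist n c b * (bpref n a c)⁻¹ = halfTwist n a b := by
  induction c, hac using Nat.le_induction with
  | base => rw [bpref_of_le le_rfl, one_mul, inv_one, mul_one]
  | succ c hac ih =>
    rw [← ih (by omega), bpref_succ hac, halfTwist_eq_bgen_conj hcb]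
    group

theorem bgen_braid_halfTwist {t b : ℕ} (htb : t + 1 < b) (hb : b < n) :
    bgen n t * halfTwist n (t + 1) b * bgen n t =
      halfTwist n (t + 1) b * bgen n t * halfTwist n (t + 1) b := by
  obtain ⟨d, rfl⟩ : ∃ d, b = t + 2 + d := ⟨b - (t + 2), by omega⟩
  induction d generalizing t with
  | zero => rw [halfTwist_self_succ]; exact bgen_braid (by omega)
  | succ d ih =>
    have hd : t + 2 + (d + 1) = t + 1 + 2 + d := by omega
    rw [hd] at hb ⊢
    rw [halfTwist_eq_bgen_conj (by omega)]
    exact braid_conj_of_braid (bgen_braid (by omega)) (ih (by omega) hb)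
      (bgen_commute_halfTwist (by omega) (by omega))

theorem halfTwist_mul_halfTwist {a c b : ℕ} (hac : a < c) (hcb : c < b) (hb : b < n) :
    halfTwist n a b * halfTwist n a c = halfTwist n a c * halfTwist n c b ∧
      halfTwist n a c * halfTwist n c b = halfTwist n c b * halfTwist n a b := by
  have hconj := bpref_conj_halfTwist (n := n) hac.le hcb
  have hbraid := bgen_braid_halfTwist (n := n) (t := c - 1) (by omega) hb
  have hsplit := bpref_succ (n := n) (show a ≤ c - 1 by omega)
  rw [Nat.sub_add_cancel (show 1 ≤ c by omega)] at hbraid hsplit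
  have hcomm : Commute (bpref n a (c - 1)) (halfTwist n c b) :=
    bpref_commute_halfTwist (by omega) hcb
  set p := bpref n a (c - 1)
  set u := bgen n (c - 1)
  set T := halfTwist n c b
  have hB : halfTwist n a c = p * u * p⁻¹ := rfl
  have hA : halfTwist n a b = p * u * T * u⁻¹ * p⁻¹ := by rw [← hconj, hsplit]; group
  have hAB : halfTwist n a b * halfTwist n a c = p * u * T * p⁻¹ := by rw [hA, hB]; group
  have hBC : halfTwist n a c * T = p * u * T * p⁻¹ := by
    rw [hB, mul_assoc (p * u), hcomm.inv_left.eq]; group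
  have hCA : T * halfTwist n a b = p * u * T * p⁻¹ := by
    calc T * halfTwist n a b = T * p * (u * T * u⁻¹ * p⁻¹) := by rw [hA]; group
      _ = p * (T * u * T) * u⁻¹ * p⁻¹ := by rw [← hcomm.eq]; group
      _ = p * u * T * p⁻¹ := by rw [← hbraid]; group
  exact ⟨hAB.trans hBC.symm, hBC.trans hCA.symm⟩

theorem bb_comm (a b : ℕ) : bb n a b = bb n b a := by rw [bb, bb, min_comm, max_comm]

theorem bb_of_lt {a b : ℕ} (h : a < b) : bb n a b = halfTwist n a b := by
  rw [bb, min_eq_left h.le, max_eq_right h.le]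

theorem bb_mul_bb {i j k : ℕ} (hi : i < n) (hj : j < n) (hk : k < n)
    (horder : (i < k ∧ k < j) ∨ (j < i ∧ i < k) ∨ (k < j ∧ j < i)) :
    bb n i j * bb n i k = bb n i k * bb n k j ∧ bb n i k * bb n k j = bb n k j * bb n i j := by
  rcases horder with ⟨hik, hkj⟩ | ⟨hji, hik⟩ | ⟨hkj, hji⟩
  · rw [bb_of_lt (hik.trans hkj), bb_of_lt hik, bb_of_lt hkj]
    exact halfTwist_mul_halfTwist hik hkj hj
  · obtain ⟨hAB, hBC⟩ := halfTwist_mul_halfTwist hji hik hk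
    rw [bb_comm i j, bb_of_lt hji, bb_of_lt hik, bb_comm k j, bb_of_lt (hji.trans hik)]
    exact ⟨hBC, (hAB.trans hBC).symm⟩
  · obtain ⟨hAB, hBC⟩ := halfTwist_mul_halfTwist hkj hji hi
    rw [bb_comm i j, bb_of_lt hji, bb_comm i k, bb_of_lt (hkj.trans hji), bb_of_lt hkj]
    exact ⟨(hAB.trans hBC).symm, hAB⟩

variable {π : BraidGroup n →* Equiv.Perm (Fin n)}

theorem bgen_sq_mem_ker (hgen : IsBraidProj n π) (t : ℕ) : bgen n t ^ 2 ∈ π.ker := by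
  unfold bgen
  split_ifs with h
  · rw [MonoidHom.mem_ker, map_pow, hgen, sq, Equiv.swap_mul_self]
  · rw [one_pow]
    exact one_mem _

theorem halfTwist_sq_mem_ker (hgen : IsBraidProj n π) (a b : ℕ) :
    halfTwist n a b ^ 2 ∈ π.ker := by
  rw [halfTwist, conj_pow]
  exact π.normal_ker.conj_mem _ (bgen_sq_mem_ker hgen _) _

theorem ft_eq_ht_sq (a b : ℕ) : ft n π a b = ht n π a b ^ 2 := QuotientGroup.mk_pow _ _ 2

end BraidGroup

theorem statement10_general (n : ℕ) (π : BraidGroup n →* Equiv.Perm (Fin n))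
    (hgen : IsBraidProj n π)
    (i j k : ℕ) (hi : i < n) (hj : j < n) (hk : k < n)
    (horder : (i < k ∧ k < j) ∨ (j < i ∧ i < k) ∨ (k < j ∧ j < i)) :
    ht n π i j * ht n π j k * (ht n π i j)⁻¹ * (ht n π i k)⁻¹ =
      ft n π i j * (ft n π k j)⁻¹ ∧
    (ht n π i j)⁻¹ * ht n π j k * ht n π i j = ht n π i k := by
  obtain ⟨hxz, hzy⟩ := BraidGroup.bb_mul_bb hi hj hk horder
  have hjk : ht n π j k = ht n π k j := by rw [ht, ht, BraidGroup.bb_comm]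
  rw [hjk, BraidGroup.ft_eq_ht_sq, BraidGroup.ft_eq_ht_sq]
  refine conj_eq_and_commutator_eq_sq ?_ ?_ ?_
  · simp only [ht, ← QuotientGroup.mk_mul, hxz]
  · simp only [ht, ← QuotientGroup.mk_mul, hzy]
  · rw [← BraidGroup.ft_eq_ht_sq, ← BraidGroup.ft_eq_ht_sq]
    exact QuotientGroup.commute_mk_of_mem_of_mem (BraidGroup.halfTwist_sq_mem_ker hgen _ _)
      (BraidGroup.halfTwist_sq_mem_ker hgen _ _)

/-- In `G_n = B_n/[PB_n, PB_n]`, for `i<k<j`, `j<i<k`, or `k<j<i`,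
`σ̃_{i,j} σ̃_{j,k} σ̃_{i,j}⁻¹ σ̃_{i,k}⁻¹ = g_{i,j} g_{k,j}⁻¹`, and equivalently
`σ̃_{i,j}⁻¹ σ̃_{j,k} σ̃_{i,j} = σ̃_{i,k}`. -/
theorem statement10 (n : ℕ) (π : BraidGroup n →* Equiv.Perm (Fin n))
    (hgen : IsBraidProj n π) (hsurj : Function.Surjective π)
    (i j k : ℕ) (hi : i < n) (hj : j < n) (hk : k < n)
    (horder : (i < k ∧ k < j) ∨ (j < i ∧ i < k) ∨ (k < j ∧ j < i)) :
    ht n π i j * ht n π j k * (ht n π i j)⁻¹ * (ht n π i k)⁻¹ =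
      ft n π i j * (ft n π k j)⁻¹ ∧
    (ht n π i j)⁻¹ * ht n π j k * ht n π i j = ht n π i k :=
  statement10_general n π hgen i j k hi hj hk horder
end

section
/- The cohomology class [φ] ∈ H²(S_n; ℤ^(n choose 2)) classifying the extension 0 → ℤ^(n choose 2) → G_n → S_n → 1 (where G_n = B_n/[PB_n,PB_n]) has order exactly 2: 2[φ] = 0 but [φ] ≠ 0. -/
/-- Index type for pairs `i < j`. -/
def PairIdx (n : ℕ) := {p : Fin n × Fin n // p.1 < p.2}

/-- The generator `σ̃_{i,j}` as a letter. -/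
def sF {n : ℕ} (p : PairIdx n) : FreeGroup (PairIdx n ⊕ PairIdx n) := FreeGroup.of (Sum.inl p)

/-- The generator `g_{i,j}` as a letter. -/
def gF {n : ℕ} (p : PairIdx n) : FreeGroup (PairIdx n ⊕ PairIdx n) := FreeGroup.of (Sum.inr p)

/-- `σ̃_{i,j}` with the unordered convention (junk value `1` if `i = j`). -/
def sU {n : ℕ} (i j : Fin n) : FreeGroup (PairIdx n ⊕ PairIdx n) :=
  if h : i < j then sF ⟨(i, j), h⟩ else if h' : j < i then sF ⟨(j, i), h'⟩ else 1

/-- `g_{i,j}` with the unordered convention (junk value `1` if `i = j`). -/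
def gU {n : ℕ} (i j : Fin n) : FreeGroup (PairIdx n ⊕ PairIdx n) :=
  if h : i < j then gF ⟨(i, j), h⟩ else if h' : j < i then gF ⟨(j, i), h'⟩ else 1

/-- The relations of `G_n^t` (Table 2): all `g`'s commute; `σ̃_{i,j}² = g_{i,j}^t`;
the conjugation relations `R^t3`, `R^t4` among half twists; the commutator relations `R^t5`
valued in powers of the `g`'s; and `σ̃_{i,j} g_{k,ℓ} σ̃_{i,j}⁻¹ = g_{σ_{i,j}(k),σ_{i,j}(ℓ)}`. -/
def reltT (n : ℕ) (t : ℤ) : Set (FreeGroup (PairIdx n ⊕ PairIdx n)) :=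
  {r | ∃ p q : PairIdx n, r = gF p * gF q * (gF p)⁻¹ * (gF q)⁻¹} ∪
  {r | ∃ p : PairIdx n, r = sF p ^ 2 * (gF p ^ t)⁻¹} ∪
  {r | ∃ i j k : Fin n, ((k < i ∧ i < j) ∨ (i < j ∧ j < k) ∨ (j < k ∧ k < i)) ∧
      r = sU i j * sU k j * (sU i j)⁻¹ * (sU i k)⁻¹} ∪
  {r | ∃ i j k : Fin n, ((i < k ∧ k < j) ∨ (j < i ∧ i < k) ∨ (k < j ∧ j < i)) ∧
      r = (sU i j)⁻¹ * sU j k * sU i j * (sU i k)⁻¹} ∪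
  {r | ∃ i j k l : Fin n, i < j ∧ k < l ∧
      r = sU i j * sU k l * (sU i j)⁻¹ * (sU k l)⁻¹ *
        (if i < k ∧ k < j ∧ j < l then
            gU i k ^ t * gU i l ^ (-t) * gU j k ^ (-t) * gU j l ^ t
          else if k < i ∧ i < l ∧ l < j then
            gU k i ^ (-t) * gU k j ^ t * gU i l ^ t * gU l j ^ (-t)
          else 1)⁻¹} ∪
  {r | ∃ i j k l : Fin n, i ≠ j ∧ k ≠ l ∧
      r = sU i j * gU k l * (sU i j)⁻¹ *
        (gU (Equiv.swap i j k) (Equiv.swap i j l))⁻¹}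

/-- The group `G_n^t` of Table 2. -/
abbrev GT (n : ℕ) (t : ℤ) := PresentedGroup (reltT n t)

/-!
The sign of the permutation underlying a braid is `(-1)` to the exponent sum of the braid, and
the exponent sum, being a homomorphism to an abelian group, factors through
`G_n = B_n/[PB_n, PB_n]`. A section of `G_n → S_n` would send a transposition to an involution
of `G_n`, whose exponent sum vanishes because `ℤ` is torsion-free; but transpositions are odd.

For `t = 2r` the elements `σ̃_{i,i+1} g_{i,i+1}^{-r}` of `G_n^t` are involutions satisfying the
braid and far-commutation relations, i.e. the Coxeter relations of type `A_{n-1}`. The Coxeter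
group of type `A_{n-1}` maps onto `S_n`, and has at most `n!` elements since the words
`s_{n-2} ⋯ s_k` represent all cosets of the parabolic subgroup of type `A_{n-2}`; so it is `S_n`,
and these elements define a section of `G_n^t → S_n`.
-/


open Equiv
open CoxeterMatrix (A)

section InvolutionRelations
variable {G : Type*} [Group G] {a b : G}

theorem mul_pow_three_eq_one_iff (ha : a * a = 1) (hb : b * b = 1) :
    (a * b) ^ 3 = 1 ↔ a * b * a = b * a * b := by
  have hb' : b⁻¹ = b := inv_eq_of_mul_eq_one_right hb
  have ha' : a⁻¹ = a := inv_eq_of_mul_eq_one_right ha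
  rw [show (a * b) ^ 3 = a * b * a * (b * a * b) by
    simp only [pow_succ, pow_zero, one_mul, mul_assoc], mul_eq_one_iff_eq_inv]
  simp only [mul_inv_rev, ha', hb', mul_assoc]

theorem mul_pow_two_eq_one_iff (ha : a * a = 1) (hb : b * b = 1) :
    (a * b) ^ 2 = 1 ↔ Commute a b := by
  have hb' : b⁻¹ = b := inv_eq_of_mul_eq_one_right hb
  have ha' : a⁻¹ = a := inv_eq_of_mul_eq_one_right ha
  rw [pow_two, mul_eq_one_iff_eq_inv, mul_inv_rev, ha', hb']
  rfl

end InvolutionRelations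

theorem inv_mul_eq_mul_inv_of_conj {G : Type*} [Group G] {s x y : G} (h : s * y * s⁻¹ = x) :
    x⁻¹ * s = s * y⁻¹ := by
  rw [← h]; group

theorem braid_mul_inv_of_conj {G : Type*} [Group G] {a b c ga gb gc : G}
    (hc : a * b * a⁻¹ = c) (ha : b * c * b⁻¹ = a)
    (sqa : a * a = ga * ga) (sqb : b * b = gb * gb)
    (habc : a * gb * a⁻¹ = gc) (hacb : a * gc * a⁻¹ = gb)
    (hbac : b * ga * b⁻¹ = gc) (hbca : b * gc * b⁻¹ = ga) (hcab : c * ga * c⁻¹ = gb)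
    (hab : Commute ga gb) (hac : Commute ga gc) (hbc : Commute gb gc) :
    a * ga⁻¹ * (b * gb⁻¹) * (a * ga⁻¹) = b * gb⁻¹ * (a * ga⁻¹) * (b * gb⁻¹) := by
  have mv1 : ga⁻¹ * b = b * gc⁻¹ := inv_mul_eq_mul_inv_of_conj hbca
  have mv2 : gb⁻¹ * a = a * gc⁻¹ := inv_mul_eq_mul_inv_of_conj hacb
  have mv3 : gc⁻¹ * a = a * gb⁻¹ := inv_mul_eq_mul_inv_of_conj habc
  have mv4 : gc⁻¹ * b = b * ga⁻¹ := inv_mul_eq_mul_inv_of_conj hbac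
  have hbraid : a * b * a = b * a * b := by
    calc a * b * a = (a * b * a⁻¹) * (a * a) := by group
      _ = (c * ga * c⁻¹) * (c * ga * c⁻¹) * c := by rw [hc, sqa]; group
      _ = b * (b * c * b⁻¹) * b := by rw [hcab, ← sqb]; group
      _ = b * a * b := by rw [ha]
  have hg : gb⁻¹ * (gc⁻¹ * ga⁻¹) = ga⁻¹ * (gc⁻¹ * gb⁻¹) := by
    rw [← hac.inv_inv.eq, ← mul_assoc, ← hab.inv_inv.eq, mul_assoc, hbc.inv_inv.eq]
  calc a * ga⁻¹ * (b * gb⁻¹) * (a * ga⁻¹)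
      = a * (ga⁻¹ * b) * (gb⁻¹ * a) * ga⁻¹ := by group
    _ = a * b * (gc⁻¹ * a) * (gc⁻¹ * ga⁻¹) := by rw [mv1, mv2]; group
    _ = a * b * a * (gb⁻¹ * (gc⁻¹ * ga⁻¹)) := by rw [mv3]; group
    _ = b * a * (b * ga⁻¹) * (gc⁻¹ * gb⁻¹) := by rw [hbraid, hg]; group
    _ = b * (a * gc⁻¹) * (b * gc⁻¹) * gb⁻¹ := by rw [← mv4]; group
    _ = b * gb⁻¹ * (a * ga⁻¹) * (b * gb⁻¹) := by rw [← mv2, ← mv1]; group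

theorem Equiv.swap_mul_swap_mul_swap_braid {α : Type*} [DecidableEq α] {a b c : α}
    (hab : a ≠ b) (hbc : b ≠ c) (hac : a ≠ c) :
    swap a b * swap b c * swap a b = swap b c * swap a b * swap b c := by
  rw [swap_mul_swap_mul_swap hab hac, swap_comm a b, swap_comm b c,
    swap_mul_swap_mul_swap hbc.symm hac.symm, swap_comm]

theorem Equiv.Perm.not_exists_section_of_sign_eq {E α : Type*} [Group E] [DecidableEq α]
    [Fintype α] [Nontrivial α] (p : E →* Perm α) (e : E →* Multiplicative ℤ)
    (h : ∀ x, sign (p x) = (-1) ^ (e x).toAdd) :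
    ¬ ∃ ω : Perm α →* E, p.comp ω = MonoidHom.id _ := by
  rintro ⟨ω, hω⟩
  obtain ⟨a, b, hab⟩ := exists_pair_ne α
  set w := ω (swap a b)
  have hpw : p w = swap a b := DFunLike.congr_fun hω _
  -- `w` is an involution, and `ℤ` is torsion-free
  have hew : (e w).toAdd = 0 := by
    have hw : e w * e w = 1 := by rw [← map_mul, ← map_mul, swap_mul_self, map_one, map_one]
    have := congrArg Multiplicative.toAdd hw
    rw [toAdd_mul, toAdd_one] at this
    omega
  have := h w
  rw [hpw, hew, sign_swap hab, zpow_zero] at this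
  exact absurd this (by decide)

namespace CoxeterMatrix

theorem isLiftable_A_iff {G : Type*} [Group G] {m : ℕ} (f : Fin m → G) :
    (A m).IsLiftable f ↔ (∀ i, f i * f i = 1) ∧
      (∀ i j : Fin m, (i : ℕ) + 1 = j → f i * f j * f i = f j * f i * f j) ∧
      (∀ i j : Fin m, (i : ℕ) + 1 < j → Commute (f i) (f j)) := by
  have hA : ∀ i j : Fin m, (A m) i j =
      if i = j then 1 else if (j : ℕ) + 1 = i ∨ (i : ℕ) + 1 = j then 3 else 2 :=
    fun _ _ => rfl
  constructor
  · intro h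
    have hsq : ∀ i, f i * f i = 1 := fun i => by simpa [hA] using h i i
    refine ⟨hsq, fun i j hij => ?_, fun i j hij => ?_⟩
    · rw [← mul_pow_three_eq_one_iff (hsq i) (hsq j)]
      simpa [hA, Fin.ext_iff, hij, show (i : ℕ) ≠ j by omega] using h i j
    · rw [← mul_pow_two_eq_one_iff (hsq i) (hsq j)]
      simpa [hA, Fin.ext_iff, show (i : ℕ) ≠ j by omega, show (j : ℕ) + 1 ≠ i by omega,
        show (i : ℕ) + 1 ≠ j by omega] using h i j
  · rintro ⟨hsq, hbraid, hcomm⟩ i j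
    rw [hA]
    split_ifs with hij hadj
    · subst hij; rw [pow_one, hsq]
    · rw [mul_pow_three_eq_one_iff (hsq i) (hsq j)]
      rcases hadj with h | h
      · exact (hbraid j i h).symm
      · exact hbraid i j h
    · rw [mul_pow_two_eq_one_iff (hsq i) (hsq j)]
      rcases lt_or_gt_of_ne (Fin.val_injective.ne hij) with h | h
      · exact hcomm i j (by omega)
      · exact (hcomm j i (by omega)).symm

namespace A

variable {m : ℕ}

theorem isLiftable_simple : (A m).IsLiftable (A m).simple :=
  (A m).toCoxeterSystem.simple_mul_simple_pow

/-- `s_j`, with junk value `1` for `j ≥ m`. -/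
noncomputable def simpleN (m j : ℕ) : (A m).Group :=
  if h : j < m then (A m).simple ⟨j, h⟩ else 1

theorem simpleN_mul_self (j : ℕ) : simpleN m j * simpleN m j = 1 := by
  unfold simpleN
  split_ifs
  · exact ((isLiftable_A_iff _).mp isLiftable_simple).1 _
  · exact mul_one 1

theorem simpleN_braid {j : ℕ} (h : j + 1 < m) :
    simpleN m j * simpleN m (j + 1) * simpleN m j =
      simpleN m (j + 1) * simpleN m j * simpleN m (j + 1) := by
  rw [simpleN, simpleN, dif_pos (by omega), dif_pos h]
  exact ((isLiftable_A_iff _).mp isLiftable_simple).2.1 _ _ rfl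

theorem commute_simpleN {i j : ℕ} (h : i + 1 < j) : Commute (simpleN m i) (simpleN m j) := by
  unfold simpleN
  split_ifs
  · exact ((isLiftable_A_iff _).mp isLiftable_simple).2.2 _ _ h
  all_goals simp

/-- `s_{m-1} ⋯ s_{k+1} s_k`; these words are representatives of the right cosets of the
parabolic subgroup generated by `s_0, …, s_{m-2}`. -/
noncomputable def cosetRep (m k : ℕ) : (A m).Group :=
  ((List.range' k (m - k)).reverse.map (simpleN m)).prod

theorem cosetRep_of_le {k : ℕ} (h : m ≤ k) : cosetRep m k = 1 := by
  simp [cosetRep, Nat.sub_eq_zero_of_le h]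

theorem cosetRep_eq_mul {k : ℕ} (h : k < m) :
    cosetRep m k = cosetRep m (k + 1) * simpleN m k := by
  rw [cosetRep, show m - k = m - (k + 1) + 1 by omega, List.range'_succ, List.reverse_cons,
    List.map_append, List.prod_append]
  simp [cosetRep]

theorem commute_simpleN_cosetRep {i k : ℕ} (h : i + 1 < k) :
    Commute (simpleN m i) (cosetRep m k) := by
  refine Commute.list_prod_right _ _ fun y hy => ?_
  obtain ⟨t, ht, rfl⟩ := List.mem_map.mp hy
  exact commute_simpleN (by simp [List.mem_range'_1] at ht; omega)

theorem cosetRep_mul_simpleN {k i : ℕ} (hk : k < i) (hi : i < m) :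
    cosetRep m k * simpleN m i = simpleN m (i - 1) * cosetRep m k := by
  obtain ⟨j, rfl⟩ : ∃ j, i = j + 1 := ⟨i - 1, by omega⟩
  rw [Nat.add_sub_cancel]
  replace hk : k ≤ j := by omega
  induction hk using Nat.decreasingInduction with
  | self =>
    have hc := commute_simpleN_cosetRep (m := m) (show j + 1 < j + 2 by omega)
    rw [cosetRep_eq_mul (by omega), cosetRep_eq_mul hi, mul_assoc, mul_assoc,
      ← mul_assoc _ _ (simpleN m (j + 1)), ← simpleN_braid hi]
    simp only [← mul_assoc]
    rw [hc.eq]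
  | of_succ k hkj ih =>
    rw [cosetRep_eq_mul (by omega), mul_assoc, (commute_simpleN (by omega)).eq, ← mul_assoc,
      ih, mul_assoc]

theorem apply_castSucc_castSucc (i j : Fin m) : A (m + 1) i.castSucc j.castSucc = A m i j := by
  simp [CoxeterMatrix.A, Fin.ext_iff]

noncomputable def castSuccHom (m : ℕ) : (A m).Group →* (A (m + 1)).Group :=
  (A m).toCoxeterSystem.lift ⟨fun i => (A (m + 1)).simple i.castSucc, fun i j => by
    simpa [apply_castSucc_castSucc] using isLiftable_simple i.castSucc j.castSucc⟩

theorem castSuccHom_simpleN {j : ℕ} (h : j < m) :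
    castSuccHom m (simpleN m j) = simpleN (m + 1) j := by
  rw [simpleN, simpleN, dif_pos h, dif_pos (by omega)]
  exact CoxeterSystem.lift_apply_simple _ _ _

theorem simple_eq_simpleN (i : Fin m) : (A m).toCoxeterSystem.simple i = simpleN m i := by
  rw [simpleN, dif_pos i.2]
  rfl

theorem surjective_castSuccHom_mul_cosetRep (m : ℕ) :
    Function.Surjective fun p : (A m).Group × Fin (m + 2) =>
      castSuccHom m p.1 * cosetRep (m + 1) p.2 := by
  intro w
  induction w using (A (m + 1)).toCoxeterSystem.simple_induction_right with
  | one => exact ⟨(1, Fin.last _), by simp [cosetRep_of_le]⟩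
  | mul_simple_right w i ih =>
    obtain ⟨⟨h, k⟩, rfl⟩ := ih
    have hi := i.2
    dsimp only
    rw [simple_eq_simpleN, mul_assoc]
    rcases lt_trichotomy ((i : ℕ) + 1) k with hik | hik | hik
    · rw [← (commute_simpleN_cosetRep hik).eq, ← mul_assoc, ← castSuccHom_simpleN (by omega),
        ← map_mul]
      exact ⟨(h * simpleN m i, k), rfl⟩
    · rw [← hik, ← cosetRep_eq_mul hi]
      exact ⟨(h, ⟨i, by omega⟩), rfl⟩
    · rcases Nat.lt_or_ge k i with hki | hki
      · rw [cosetRep_mul_simpleN hki hi, ← mul_assoc, ← castSuccHom_simpleN (by omega),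
          ← map_mul]
        exact ⟨(h * simpleN m (i - 1), k), rfl⟩
      · rw [show (i : ℕ) = k by omega, cosetRep_eq_mul (by omega), mul_assoc, simpleN_mul_self,
          mul_one]
        exact ⟨(h, ⟨k + 1, by omega⟩), rfl⟩

theorem exists_surjective_fin_factorial (m : ℕ) :
    ∃ f : Fin (m + 1).factorial → (A m).Group, Function.Surjective f := by
  induction m with
  | zero =>
    refine ⟨fun _ => 1, fun w => ⟨⟨0, Nat.factorial_pos _⟩, ?_⟩⟩
    induction w using (A 0).toCoxeterSystem.simple_induction_right with
    | one => rfl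
    | mul_simple_right w i _ => exact i.elim0
  | succ m ih =>
    obtain ⟨f, hf⟩ := ih
    have hcard : (m + 2).factorial = (m + 1).factorial * (m + 2) := by
      rw [Nat.factorial_succ, mul_comm]
    exact ⟨_, (surjective_castSuccHom_mul_cosetRep m).comp <|
      (hf.prodMap Function.surjective_id).comp
        ((finCongr hcard).trans finProdFinEquiv.symm).surjective⟩

instance finite (m : ℕ) : Finite (A m).Group :=
  have ⟨_, hf⟩ := exists_surjective_fin_factorial m
  .of_surjective _ hf

theorem card_le_factorial (m : ℕ) : Nat.card (A m).Group ≤ (m + 1).factorial :=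
  have ⟨_, hf⟩ := exists_surjective_fin_factorial m
  (Nat.card_le_card_of_surjective _ hf).trans_eq (Nat.card_fin _)

theorem isLiftable_swap_castSucc_succ (m : ℕ) :
    (A m).IsLiftable fun i => swap i.castSucc i.succ := by
  refine (isLiftable_A_iff _).mpr
    ⟨fun i => swap_mul_self _ _, fun i j hij => ?_, fun i j hij => ?_⟩
  · rw [show j.castSucc = i.succ from Fin.ext hij.symm]
    exact swap_mul_swap_mul_swap_braid (by simp [Fin.ext_iff]) (by simp [Fin.ext_iff]; omega)
      (by simp [Fin.ext_iff]; omega)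
  · exact (Perm.disjoint_swap_swap (by simp [Fin.ext_iff]; omega)).commute

noncomputable def permHom (m : ℕ) : (A m).Group →* Perm (Fin (m + 1)) :=
  (A m).toCoxeterSystem.lift ⟨_, isLiftable_swap_castSucc_succ m⟩

theorem permHom_simple (i : Fin m) :
    permHom m ((A m).toCoxeterSystem.simple i) = swap i.castSucc i.succ :=
  CoxeterSystem.lift_apply_simple _ _ _

theorem permHom_surjective (m : ℕ) : Function.Surjective (permHom m) := by
  rw [← MonoidHom.mrange_eq_top, eq_top_iff, ← Perm.mclosure_swap_castSucc_succ,
    Submonoid.closure_le]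
  rintro _ ⟨i, rfl⟩
  exact ⟨_, permHom_simple i⟩

theorem permHom_bijective (m : ℕ) : Function.Bijective (permHom m) := by
  refine (Nat.bijective_iff_surjective_and_card _).mpr ⟨permHom_surjective m, ?_⟩
  refine le_antisymm ?_ (Nat.card_le_card_of_surjective _ (permHom_surjective m))
  rw [Nat.card_perm, Nat.card_fin]
  exact card_le_factorial m

noncomputable def permEquiv (m : ℕ) : (A m).Group ≃* Perm (Fin (m + 1)) :=
  .ofBijective _ (permHom_bijective m)

end A

end CoxeterMatrix

noncomputable def BraidGroup.exponentSum (n : ℕ) : BraidGroup n →* Multiplicative ℤ :=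
  PresentedGroup.toGroup (f := fun _ => Multiplicative.ofAdd 1) <| by
    rintro r ⟨i, j, ⟨-, rfl⟩ | ⟨-, rfl⟩⟩ <;>
      simp only [map_mul, map_inv, FreeGroup.lift_apply_of] <;> group

theorem sign_apply_of_isBraidProj {n : ℕ} {π : BraidGroup n →* Perm (Fin n)}
    (hπ : IsBraidProj n π) (x : BraidGroup n) : Perm.sign (π x) = (-1) ^ (BraidGroup.exponentSum n x).toAdd := by
  have : Perm.sign.comp π = (zpowersHom ℤˣ (-1)).comp (BraidGroup.exponentSum n) :=
    PresentedGroup.ext fun i => by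
      simp [hπ i, BraidGroup.exponentSum, Fin.ext_iff]
  exact DFunLike.congr_fun this x

noncomputable def Gq.exponentSum (n : ℕ) (π : BraidGroup n →* Perm (Fin n)) :
    Gq n π →* Multiplicative ℤ :=
  QuotientGroup.lift _ (BraidGroup.exponentSum n)
    ((Subgroup.commutator_mono le_top le_top).trans (Abelianization.commutator_subset_ker _))

theorem sU_comm {n : ℕ} {i j : Fin n} (h : i ≠ j) : sU i j = sU j i := by
  rcases lt_or_gt_of_ne h with h' | h' <;> simp [sU, h', asymm h']

theorem gU_comm {n : ℕ} {i j : Fin n} (h : i ≠ j) : gU i j = gU j i := by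
  rcases lt_or_gt_of_ne h with h' | h' <;> simp [gU, h', asymm h']

namespace GT

section Relations

variable {n : ℕ} {t : ℤ}

def sigma (i j : Fin n) : GT n t := PresentedGroup.mk _ (sU i j)

def g (i j : Fin n) : GT n t := PresentedGroup.mk _ (gU i j)

theorem sigma_comm {i j : Fin n} (h : i ≠ j) : (sigma i j : GT n t) = sigma j i := by
  rw [sigma, sigma, sU_comm h]

theorem g_comm {i j : Fin n} (h : i ≠ j) : (g i j : GT n t) = g j i := by
  rw [g, g, gU_comm h]

theorem commute_g (i j k l : Fin n) : Commute (g i j : GT n t) (g k l) := by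
  have key (p q : PairIdx n) :
      Commute (PresentedGroup.mk (reltT n t) (gF p)) (PresentedGroup.mk _ (gF q)) := by
    have := PresentedGroup.mk_eq_mk_of_mul_inv_mem (rels := reltT n t)
      (Or.inl (Or.inl (Or.inl (Or.inl (Or.inl ⟨p, q, rfl⟩)))))
    rw [map_mul, map_mul, map_inv, mul_inv_eq_iff_eq_mul] at this
    exact this
  unfold g gU
  split_ifs <;> first | exact key _ _ | simp

theorem sigma_mul_self_of_lt {i j : Fin n} (h : i < j) :
    (sigma i j : GT n t) * sigma i j = g i j ^ t := by
  have := PresentedGroup.mk_eq_mk_of_mul_inv_mem (rels := reltT n t)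
    (Or.inl (Or.inl (Or.inl (Or.inl (Or.inr ⟨⟨(i, j), h⟩, rfl⟩)))))
  rw [map_pow, map_zpow] at this
  rw [sigma, g, sU, gU, dif_pos h, dif_pos h, ← pow_two]
  exact this

theorem sigma_mul_self {i j : Fin n} (h : i ≠ j) :
    (sigma i j : GT n t) * sigma i j = g i j ^ t := by
  rcases lt_or_gt_of_ne h with h' | h'
  · exact sigma_mul_self_of_lt h'
  · rw [sigma_comm h, g_comm h]
    exact sigma_mul_self_of_lt h'

theorem sigma_conj_sigma {i j k : Fin n}
    (h : (k < i ∧ i < j) ∨ (i < j ∧ j < k) ∨ (j < k ∧ k < i)) :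
    (sigma i j : GT n t) * sigma k j * (sigma i j)⁻¹ = sigma i k := by
  have := PresentedGroup.mk_eq_mk_of_mul_inv_mem (rels := reltT n t)
    (Or.inl (Or.inl (Or.inl (Or.inr ⟨i, j, k, h, rfl⟩))))
  simp only [map_mul, map_inv] at this
  exact this

theorem commute_sigma_of_lt {i j k l : Fin n} (hij : i < j) (hkl : k < l) (hjk : j < k) :
    Commute (sigma i j : GT n t) (sigma k l) := by
  have hmem : _ ∈ reltT n t := Or.inl (Or.inr ⟨i, j, k, l, hij, hkl, rfl⟩)
  rw [if_neg (by rintro ⟨-, hkj, -⟩; exact (hjk.trans hkj).false),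
    if_neg (by rintro ⟨hki, -, -⟩; exact (hij.trans (hjk.trans hki)).false), inv_one,
    mul_one] at hmem
  have := PresentedGroup.mk_eq_mk_of_mul_inv_mem hmem
  simp only [map_mul, map_inv] at this
  exact mul_inv_eq_iff_eq_mul.mp this

theorem sigma_conj_g {i j k l : Fin n} (hij : i ≠ j) (hkl : k ≠ l) :
    (sigma i j : GT n t) * g k l * (sigma i j)⁻¹ = g (swap i j k) (swap i j l) := by
  have := PresentedGroup.mk_eq_mk_of_mul_inv_mem (rels := reltT n t)
    (Or.inr ⟨i, j, k, l, hij, hkl, rfl⟩)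
  simp only [map_mul, map_inv] at this
  exact this

theorem sigma_conj_g_zpow {i j k l : Fin n} (hij : i ≠ j) (hkl : k ≠ l) (r : ℤ) :
    (sigma i j : GT n t) * g k l ^ r * (sigma i j)⁻¹ = g (swap i j k) (swap i j l) ^ r := by
  rw [← conj_zpow, sigma_conj_g hij hkl]

theorem commute_sigma_g {i j : Fin n} (h : i ≠ j) (r : ℤ) :
    Commute (sigma i j : GT n t) (g i j ^ r) := by
  have := sigma_conj_g_zpow (t := t) h h r
  rwa [swap_apply_left, swap_apply_right, ← g_comm h, mul_inv_eq_iff_eq_mul] at this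

end Relations

section SwapLift

variable {n : ℕ}

/-- The image of the transposition `(i j)` under the splitting `ω` of `G_n^{2r} → S_n`. -/
def swapLift (r : ℤ) (i j : Fin n) : GT n (r + r) := sigma i j * (g i j ^ r)⁻¹

variable (r : ℤ)

theorem swapLift_mul_self {i j : Fin n} (h : i ≠ j) : swapLift r i j * swapLift r i j = 1 := by
  have hc := (commute_sigma_g (t := r + r) h r).inv_right
  calc swapLift r i j * swapLift r i j
        = sigma i j * (sigma i j * (g i j ^ r)⁻¹ * (g i j ^ r)⁻¹) := by
        rw [swapLift, mul_assoc, ← mul_assoc (g i j ^ r)⁻¹ (sigma i j), ← hc.eq]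
    _ = 1 := by rw [← mul_assoc, ← mul_assoc, sigma_mul_self h, zpow_add]; group

theorem swapLift_braid {u v w : Fin n} (huv : u < v) (hvw : v < w) :
    swapLift r u v * swapLift r v w * swapLift r u v =
      swapLift r v w * swapLift r u v * swapLift r v w := by
  have nuv := huv.ne
  have nvw := hvw.ne
  have nuw := (huv.trans hvw).ne
  apply braid_mul_inv_of_conj (c := sigma u w) (gc := g u w ^ r)
  · rw [← sigma_comm nvw.symm]
    exact sigma_conj_sigma (Or.inr (Or.inl ⟨huv, hvw⟩))
  · rw [sigma_comm nuv]
    exact sigma_conj_sigma (Or.inl ⟨huv, hvw⟩)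
  · rw [sigma_mul_self nuv, zpow_add]
  · rw [sigma_mul_self nvw, zpow_add]
  · rw [sigma_conj_g_zpow nuv nvw, swap_apply_right, swap_apply_of_ne_of_ne nuw.symm nvw.symm]
  · rw [sigma_conj_g_zpow nuv nuw, swap_apply_left, swap_apply_of_ne_of_ne nuw.symm nvw.symm,
      g_comm nvw]
  · rw [sigma_conj_g_zpow nvw nuv, swap_apply_of_ne_of_ne nuv nuw, swap_apply_left]
  · rw [sigma_conj_g_zpow nvw nuw, swap_apply_of_ne_of_ne nuv nuw, swap_apply_right, g_comm nuv]
  · rw [sigma_conj_g_zpow nuw nuv, swap_apply_left, swap_apply_of_ne_of_ne nuv.symm nvw,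
      g_comm nvw.symm]
  all_goals exact (commute_g _ _ _ _).zpow_zpow r r

theorem commute_swapLift {u v w x : Fin n} (huv : u < v) (hwx : w < x) (hvw : v < w) :
    Commute (swapLift r u v) (swapLift r w x) := by
  have hconj {i j k l : Fin n} (hij : i ≠ j) (hkl : k ≠ l) (hki : k ≠ i) (hkj : k ≠ j)
      (hli : l ≠ i) (hlj : l ≠ j) : Commute (sigma i j : GT n (r + r)) (g k l ^ r) := by
    have := sigma_conj_g_zpow (t := r + r) hij hkl r
    rwa [swap_apply_of_ne_of_ne hki hkj, swap_apply_of_ne_of_ne hli hlj,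
      mul_inv_eq_iff_eq_mul] at this
  have hwu : w ≠ u := (huv.trans hvw).ne'
  have hxu : x ≠ u := (huv.trans (hvw.trans hwx)).ne'
  have hxv : x ≠ v := (hvw.trans hwx).ne'
  refine ((commute_sigma_of_lt huv hwx hvw).mul_right ?_).mul_left
    ((?_ : Commute _ _).mul_right ((commute_g _ _ _ _).zpow_zpow r r).inv_inv)
  · exact (hconj huv.ne hwx.ne hwu hvw.ne' hxu hxv).inv_right
  · exact (hconj hwx.ne huv.ne hwu.symm hxu.symm hvw.ne hxv.symm).symm.inv_left

theorem isLiftable_swapLift (m : ℕ) :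
    (A m).IsLiftable fun i => swapLift r i.castSucc i.succ := by
  refine (CoxeterMatrix.isLiftable_A_iff _).mpr
    ⟨fun i => ?_, fun i j hij => ?_, fun i j hij => ?_⟩
  · exact swapLift_mul_self r Fin.castSucc_lt_succ.ne
  · rw [show j.castSucc = i.succ from Fin.ext hij.symm]
    exact swapLift_braid r Fin.castSucc_lt_succ
      (by rw [Fin.lt_def]; simp only [Fin.val_succ]; omega)
  · exact commute_swapLift r Fin.castSucc_lt_succ Fin.castSucc_lt_succ
      (by rw [Fin.lt_def]; simp only [Fin.val_succ, Fin.val_castSucc]; omega)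

end SwapLift

section Splitting

variable {m : ℕ} {t : ℤ} (π₂ : GT (m + 1) t →* Perm (Fin (m + 1)))

theorem map_sigma_of_lt
    (hs : ∀ p : PairIdx (m + 1), π₂ (PresentedGroup.of (Sum.inl p)) = swap p.1.1 p.1.2)
    {i j : Fin (m + 1)} (h : i < j) : π₂ (sigma i j) = swap i j := by
  rw [sigma, sU, dif_pos h]
  exact hs _

theorem map_g (hg : ∀ p : PairIdx (m + 1), π₂ (PresentedGroup.of (Sum.inr p)) = 1)
    (i j : Fin (m + 1)) : π₂ (g i j) = 1 := by
  unfold g gU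
  split_ifs
  · exact hg _
  · exact hg _
  · exact map_one _

theorem exists_splitting (ht : Even t)
    (hs : ∀ p : PairIdx (m + 1), π₂ (PresentedGroup.of (Sum.inl p)) = swap p.1.1 p.1.2)
    (hg : ∀ p : PairIdx (m + 1), π₂ (PresentedGroup.of (Sum.inr p)) = 1) :
    ∃ ω : Perm (Fin (m + 1)) →* GT (m + 1) t, π₂.comp ω = MonoidHom.id _ := by
  obtain ⟨r, rfl⟩ := ht
  let cs := (A m).toCoxeterSystem
  have hlift : π₂.comp (cs.lift ⟨_, isLiftable_swapLift r m⟩) = A.permHom m := by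
    refine cs.ext_simple fun i => ?_
    rw [MonoidHom.comp_apply, CoxeterSystem.lift_apply_simple, A.permHom_simple,
      swapLift, map_mul, map_inv, map_zpow, map_sigma_of_lt π₂ hs Fin.castSucc_lt_succ,
      map_g π₂ hg, one_zpow, inv_one, mul_one]
  refine ⟨(cs.lift ⟨_, isLiftable_swapLift r m⟩).comp (A.permEquiv m).symm, ?_⟩
  rw [← MonoidHom.comp_assoc, hlift]
  ext σ : 1
  exact (A.permEquiv m).apply_symm_apply σ

end Splitting

end GT

theorem statement14_general (n : ℕ) (hn : 2 ≤ n) (π : BraidGroup n →* Equiv.Perm (Fin n))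
    (hgen : IsBraidProj n π) :
    -- `[φ] ≠ 0`: the extension `G_n` of `S_n` does not split
    (∀ p : Gq n π →* Equiv.Perm (Fin n),
      (∀ x : BraidGroup n, p (QuotientGroup.mk x) = π x) →
      ¬ ∃ ω : Equiv.Perm (Fin n) →* Gq n π,
          p.comp ω = MonoidHom.id (Equiv.Perm (Fin n))) ∧
    -- `2·[φ] = 0`: the extension `G_n^2` of `S_n` splits
    (∀ π₂ : GT n 2 →* Equiv.Perm (Fin n),
      (∀ p : PairIdx n, π₂ (PresentedGroup.of (Sum.inl p)) = Equiv.swap p.1.1 p.1.2) →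
      (∀ p : PairIdx n, π₂ (PresentedGroup.of (Sum.inr p)) = 1) →
      ∃ ω : Equiv.Perm (Fin n) →* GT n 2,
        π₂.comp ω = MonoidHom.id (Equiv.Perm (Fin n))) := by
  have : Nontrivial (Fin n) := Fin.nontrivial_iff_two_le.mpr hn
  refine ⟨fun p hp => Perm.not_exists_section_of_sign_eq p (Gq.exponentSum n π) fun x => ?_,
    ?_⟩
  · induction x using QuotientGroup.induction_on with
    | H y => rw [hp]; exact sign_apply_of_isBraidProj hgen y
  · obtain ⟨m, rfl⟩ : ∃ m, n = m + 1 := ⟨n - 1, by omega⟩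
    exact fun π₂ => GT.exists_splitting π₂ even_two

/-- For `n ≥ 2`, the cohomology class `[φ] ∈ H²(S_n; ℤ^(n choose 2))`
classifying the extension `0 → ℤ^(n choose 2) → G_n → S_n → 1` (with
`G_n = B_n/[PB_n,PB_n]`) has order exactly 2.  Concretely: `[φ] ≠ 0`, i.e. the extension
`G_n → S_n` admits no splitting homomorphism; and `2·[φ] = 0`, i.e. the extension `G_n^2`
(classified by `2[φ]`) splits. -/
theorem statement14 (n : ℕ) (hn : 2 ≤ n) (π : BraidGroup n →* Equiv.Perm (Fin n))
    (hgen : IsBraidProj n π) (hsurj : Function.Surjective π) :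
    -- `[φ] ≠ 0`: the extension `G_n` of `S_n` does not split
    (∀ p : Gq n π →* Equiv.Perm (Fin n),
      (∀ x : BraidGroup n, p (QuotientGroup.mk x) = π x) →
      ¬ ∃ ω : Equiv.Perm (Fin n) →* Gq n π,
          p.comp ω = MonoidHom.id (Equiv.Perm (Fin n))) ∧
    -- `2·[φ] = 0`: the extension `G_n^2` of `S_n` splits
    (∀ π₂ : GT n 2 →* Equiv.Perm (Fin n),
      (∀ p : PairIdx n, π₂ (PresentedGroup.of (Sum.inl p)) = Equiv.swap p.1.1 p.1.2) →
      (∀ p : PairIdx n, π₂ (PresentedGroup.of (Sum.inr p)) = 1) →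
      ∃ ω : Equiv.Perm (Fin n) →* GT n 2,
        π₂.comp ω = MonoidHom.id (Equiv.Perm (Fin n))) :=
  statement14_general n hn π hgen
end
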